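/- arXiv:0709.3140 — 2 statements merged into one kernel-verified Lean document; each statement's English description precedes it below -/
import Mathlib

section
/- If T is a tree with at least two vertices that has no perfect matching, then the absolute value of the product of the nonzero eigenvalues (with multiplicity) of the adjacency matrix of T is at least 2. -/
set_option linter.unusedSectionVars false
set_option maxHeartbeats 1000000

open Finset SimpleGraph Polynomial

namespace GraphEnergy

variable {V : Type*} [Fintype V] [DecidableEq V]

/-- The real adjacency matrix of a simple graph. -/
noncomputable def adjMat (G : SimpleGraph V) : Matrix V V ℝ :=
  letI := Classical.decRel G.Adj
  G.adjMatrix ℝ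

theorem adjMat_isHermitian (G : SimpleGraph V) : (adjMat G).IsHermitian := by
  letI := Classical.decRel G.Adj
  ext i j
  simp [adjMat, Matrix.conjTranspose_apply, SimpleGraph.adjMatrix_apply, SimpleGraph.adj_comm]

/-- The eigenvalues (with multiplicity) of the real adjacency matrix of `G`, indexed by `V`. -/
noncomputable def eig (G : SimpleGraph V) : V → ℝ :=
  (adjMat_isHermitian G).eigenvalues

/-- The energy of a graph: the sum of the absolute values of its adjacency eigenvalues. -/
noncomputable def energy (G : SimpleGraph V) : ℝ :=
  ∑ i, |eig G i|

/-- The rank of the adjacency matrix of `G` over `ℝ`. -/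
noncomputable def grank (G : SimpleGraph V) : ℕ :=
  (adjMat G).rank

/-- A matching of `G`: a finite set of edges of `G`, pairwise sharing no vertex. -/
def IsMatching (G : SimpleGraph V) (M : Finset (Sym2 V)) : Prop :=
  ↑M ⊆ G.edgeSet ∧ ∀ e ∈ M, ∀ f ∈ M, e ≠ f → ∀ v : V, ¬(v ∈ e ∧ v ∈ f)

/-- A maximum matching of `G`: a matching of the largest possible cardinality. -/
def IsMaxMatching (G : SimpleGraph V) (M : Finset (Sym2 V)) : Prop :=
  IsMatching G M ∧ ∀ N : Finset (Sym2 V), IsMatching G N → N.card ≤ M.card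

/-- A perfect matching of `G`: a matching covering every vertex. -/
def IsPerfectMatching (G : SimpleGraph V) (M : Finset (Sym2 V)) : Prop :=
  IsMatching G M ∧ ∀ v : V, ∃ e ∈ M, v ∈ e


variable {G : SimpleGraph V}

/-- Walk following iterates of a permutation whose moves are along edges. -/
noncomputable def mkWalk (G : SimpleGraph V) (σ : Equiv.Perm V)
    (h : ∀ v, σ v ≠ v → G.Adj v (σ v)) (a : V) (ha : σ a ≠ a) :
    (k : ℕ) → G.Walk a (σ^[k] a)
  | 0 => SimpleGraph.Walk.nil
  | (k+1) =>
    (SimpleGraph.Walk.concat (mkWalk G σ h a ha k)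
      (by
        refine h _ (fun hfix => ha ((σ.injective.iterate k) ?_))
        show (⇑σ)^[k] (σ a) = (⇑σ)^[k] a
        rw [← Function.iterate_succ_apply, Function.iterate_succ_apply']
        exact hfix)).copy rfl (Function.iterate_succ_apply' σ k a).symm

lemma edges_mkWalk (σ : Equiv.Perm V) (h : ∀ v, σ v ≠ v → G.Adj v (σ v)) (a : V)
    (ha : σ a ≠ a) (k : ℕ) :
    ∀ e ∈ (mkWalk G σ h a ha k).edges, ∃ i, i < k ∧ e = s(σ^[i] a, σ^[i+1] a) := by
  induction k with
  | zero => simp [mkWalk]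
  | succ k ih =>
    intro e he
    rw [mkWalk, SimpleGraph.Walk.edges_copy, SimpleGraph.Walk.edges_concat,
      List.concat_eq_append, List.mem_append] at he
    rcases he with he | he
    · obtain ⟨i, hi, hei⟩ := ih e he
      exact ⟨i, Nat.lt_succ_of_lt hi, hei⟩
    · simp only [List.mem_singleton] at he
      exact ⟨k, Nat.lt_succ_self k, by rw [he, Function.iterate_succ_apply']⟩

lemma good_involutive (hT : G.IsAcyclic) (σ : Equiv.Perm V)
    (h : ∀ v, σ v ≠ v → G.Adj v (σ v)) : ∀ v, σ (σ v) = v := by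
  by_contra hc
  push_neg at hc
  obtain ⟨a, ha2⟩ := hc
  have ha : σ a ≠ a := fun hfix => ha2 (by rw [hfix, hfix])
  have hb : σ (σ a) ≠ σ a := fun hfix => ha (σ.injective hfix)
  set k := Function.minimalPeriod σ a with hkdef
  have hper : Function.IsPeriodicPt σ (orderOf σ) a := by
    show σ^[orderOf σ] a = a
    rw [Equiv.Perm.iterate_eq_pow, pow_orderOf_eq_one]; rfl
  have hk0 : 0 < k := hper.minimalPeriod_pos (orderOf_pos σ)
  have hkk : σ^[k] a = a := Function.iterate_minimalPeriod
  have hk1 : k ≠ 1 := by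
    intro h1; apply ha; have h' := hkk; rw [h1] at h'; simpa using h'
  have hk2 : k ≠ 2 := by
    intro h2; apply ha2; have h' := hkk; rw [h2] at h'
    rw [show (2:ℕ) = 1 + 1 from rfl, Function.iterate_succ_apply', Function.iterate_one] at h'
    exact h'
  have hk3 : 3 ≤ k := by omega
  -- walk from σ a of length k-1 ending at a
  have hend : σ^[k-1] (σ a) = a := by
    rw [← Function.iterate_succ_apply]
    have h' : (k - 1).succ = k := by omega
    rw [h', hkk]
  let w : G.Walk (σ a) a := ((mkWalk G σ h (σ a) hb (k-1)).copy rfl hend)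
  have hadj : G.Adj (σ a) a := (h a ha).symm
  have hpath : SimpleGraph.Path.singleton hadj = w.toPath := hT.path_unique _ _
  have hmem : s(σ a, a) ∈ (w.toPath : G.Walk (σ a) a).edges := by
    rw [← hpath]
    simp [SimpleGraph.Path.singleton]
  have hmem2 : s(σ a, a) ∈ w.edges := SimpleGraph.Walk.edges_toPath_subset w hmem
  rw [SimpleGraph.Walk.edges_copy] at hmem2
  obtain ⟨i, hik, hei⟩ := edges_mkWalk σ h (σ a) hb (k-1) _ hmem2
  have hrw : ∀ j : ℕ, σ^[j] (σ a) = σ^[j+1] a := fun j => (Function.iterate_succ_apply σ j a).symm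
  rw [hrw, hrw] at hei
  have hinj := Function.iterate_injOn_Iio_minimalPeriod (f := σ) (x := a)
  rw [← hkdef] at hinj
  rw [Sym2.eq_iff] at hei
  rcases hei with ⟨h1, h2⟩ | ⟨h1, h2⟩
  · -- σ a = σ^[i+1] a and a = σ^[i+1+1] a
    have : (1 : ℕ) = i + 1 := hinj (by simp; omega) (by simp; omega) (by simpa using h1)
    have hi0 : i = 0 := by omega
    rw [hi0] at h2
    exact ha2 (by simpa [Function.iterate_succ_apply'] using h2.symm)
  · -- σ a = σ^[i+1+1] a and a = σ^[i+1] a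
    have : (0 : ℕ) = i + 1 := hinj (by simp; omega) (by simp; omega) (by simpa using h2)
    omega


lemma sign_involutive_aux : ∀ (k : ℕ) (σ : Equiv.Perm V), (∀ v, σ (σ v) = v) →
    (univ.filter fun v => σ v ≠ v).card = 2 * k → Equiv.Perm.sign σ = (-1) ^ k := by
  intro k
  induction k with
  | zero =>
    intro σ hinv hcard
    have h1 : σ = 1 := by
      ext v
      by_contra hv
      have hv' : σ v ≠ v := by simpa using hv
      have : v ∈ univ.filter fun v => σ v ≠ v := by simp [hv']
      rw [Finset.card_eq_zero.mp (by omega : (univ.filter fun v => σ v ≠ v).card = 0)] at this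
      simp at this
    simp [h1]
  | succ k ih =>
    intro σ hinv hcard
    have hne : (univ.filter fun v => σ v ≠ v).Nonempty := by
      rw [← Finset.card_pos, hcard]; omega
    obtain ⟨v, hv⟩ := hne
    rw [Finset.mem_filter] at hv
    have hvne : σ v ≠ v := hv.2
    set τ : Equiv.Perm V := σ * Equiv.swap v (σ v) with hτ
    have hτv : τ v = v := by simp [hτ, Equiv.swap_apply_left, hinv]
    have hτσv : τ (σ v) = σ v := by simp [hτ, Equiv.swap_apply_right]
    have hτo : ∀ w, w ≠ v → w ≠ σ v → τ w = σ w := by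
      intro w h1 h2; simp [hτ, Equiv.swap_apply_of_ne_of_ne h1 h2]
    have hτinv : ∀ w, τ (τ w) = w := by
      intro w
      by_cases h1 : w = v
      · rw [h1, hτv, hτv]
      by_cases h2 : w = σ v
      · rw [h2, hτσv, hτσv]
      · rw [hτo w h1 h2]
        have hσw1 : σ w ≠ v := fun hh => h2 (by rw [← hh, hinv])
        have hσw2 : σ w ≠ σ v := fun hh => h1 (σ.injective hh)
        rw [hτo _ hσw1 hσw2, hinv]
    have hset : (univ.filter fun w => τ w ≠ w) = (univ.filter fun w => σ w ≠ w) \ {v, σ v} := by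
      ext w
      simp only [Finset.mem_filter, Finset.mem_sdiff, Finset.mem_insert, Finset.mem_singleton,
        Finset.mem_univ, true_and]
      constructor
      · intro hw
        have h1 : w ≠ v := fun hh => hw (hh ▸ hτv)
        have h2 : w ≠ σ v := fun hh => hw (hh ▸ hτσv)
        exact ⟨by rwa [hτo w h1 h2] at hw, fun hh => hh.elim h1 h2⟩
      · rintro ⟨hw, hne2⟩
        push_neg at hne2
        rw [hτo w hne2.1 hne2.2]; exact hw
    have hsub : ({v, σ v} : Finset V) ⊆ univ.filter fun w => σ w ≠ w := by
      intro w hw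
      simp only [Finset.mem_insert, Finset.mem_singleton] at hw
      rcases hw with rfl | rfl
      · simp [hvne]
      · simp only [Finset.mem_filter, Finset.mem_univ, true_and]
        intro hh; exact hvne (by rw [← hinv v] at hh ⊢; exact σ.injective hh)
    have hcard2 : ({v, σ v} : Finset V).card = 2 := by
      rw [Finset.card_insert_of_notMem (by simpa using (Ne.symm hvne)), Finset.card_singleton]
    have hcardτ : (univ.filter fun w => τ w ≠ w).card = 2 * k := by
      rw [hset, Finset.card_sdiff_of_subset hsub, hcard2, hcard]; omega
    have hsign := ih τ hτinv hcardτ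
    have hστ : σ = τ * Equiv.swap v (σ v) := by
      rw [hτ, mul_assoc, Equiv.swap_mul_self, mul_one]
    rw [hστ, Equiv.Perm.sign_mul, hsign, Equiv.Perm.sign_swap (Ne.symm hvne), pow_add, pow_one]

/-- The partner function of a matching. -/
noncomputable def matchFun (M : Finset (Sym2 V)) (v : V) : V :=
  if h : ∃ e, e ∈ M ∧ v ∈ e then Sym2.Mem.other' h.choose_spec.2 else v

lemma matchFun_eq_of_not_covered {M : Finset (Sym2 V)} {v : V}
    (h : ¬ ∃ e, e ∈ M ∧ v ∈ e) : matchFun M v = v := by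
  rw [matchFun, dif_neg h]

lemma matchFun_edge_mem {M : Finset (Sym2 V)} {v : V} (h : ∃ e, e ∈ M ∧ v ∈ e) :
    s(v, matchFun M v) ∈ M := by
  rw [matchFun, dif_pos h, Sym2.other_spec']
  exact h.choose_spec.1

lemma matchFun_uniq (hM : IsMatching G M) {e : Sym2 V} {v : V} (he : e ∈ M) (hv : v ∈ e) :
    e = s(v, matchFun M v) := by
  have h : ∃ e, e ∈ M ∧ v ∈ e := ⟨e, he, hv⟩
  rw [matchFun, dif_pos h, Sym2.other_spec']
  by_contra hne
  exact hM.2 e he _ h.choose_spec.1 hne v ⟨hv, h.choose_spec.2⟩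

lemma matchFun_ne (hM : IsMatching G M) {v : V} (h : ∃ e, e ∈ M ∧ v ∈ e) :
    matchFun M v ≠ v := by
  intro hfix
  have hmem := matchFun_edge_mem h
  rw [hfix] at hmem
  exact (G.not_isDiag_of_mem_edgeSet (hM.1 hmem)) (Sym2.isDiag_iff_proj_eq.mpr rfl)

lemma matchFun_covered (hM : IsMatching G M) {v : V} (h : matchFun M v ≠ v) :
    ∃ e, e ∈ M ∧ v ∈ e := by
  by_contra hc; exact h (matchFun_eq_of_not_covered hc)

lemma matchFun_involutive (hM : IsMatching G M) : ∀ v, matchFun M (matchFun M v) = v := by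
  intro v
  by_cases h : ∃ e, e ∈ M ∧ v ∈ e
  · have hmem := matchFun_edge_mem h
    have h2 := matchFun_uniq hM hmem (Sym2.mem_mk_right v (matchFun M v))
    rw [Sym2.eq_iff] at h2
    rcases h2 with ⟨h1, _⟩ | ⟨h1, _⟩
    · exact absurd h1.symm (matchFun_ne hM h)
    · exact h1.symm
  · rw [matchFun_eq_of_not_covered h, matchFun_eq_of_not_covered h]

/-- The permutation associated to a matching. -/
noncomputable def matchPerm (G : SimpleGraph V) (hM : IsMatching G M) : Equiv.Perm V :=
  Function.Involutive.toPerm (matchFun M) (matchFun_involutive hM)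

lemma matchPerm_apply (hM : IsMatching G M) (v : V) : matchPerm G hM v = matchFun M v := rfl

lemma matchPerm_good (hM : IsMatching G M) :
    ∀ v, matchPerm G hM v ≠ v → G.Adj v (matchPerm G hM v) := by
  intro v hv
  rw [matchPerm_apply] at hv ⊢
  have h := matchFun_covered hM hv
  exact (G.mem_edgeSet).mp (hM.1 (matchFun_edge_mem h))


-- new material
/-- The matching induced by an involutive permutation along edges. -/
def permMatch (σ : Equiv.Perm V) : Finset (Sym2 V) :=
  (univ.filter fun v => σ v ≠ v).image fun v => s(v, σ v)

lemma permMatch_edge_form {σ : Equiv.Perm V} (hinv : ∀ v, σ (σ v) = v) {e : Sym2 V} {v : V}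
    (he : e ∈ permMatch σ) (hv : v ∈ e) : σ v ≠ v ∧ e = s(v, σ v) := by
  rw [permMatch, Finset.mem_image] at he
  obtain ⟨w, hw, rfl⟩ := he
  rw [Finset.mem_filter] at hw
  rw [Sym2.mem_iff] at hv
  rcases hv with rfl | rfl
  · exact ⟨hw.2, rfl⟩
  · constructor
    · rw [hinv w]; exact fun hh => hw.2 hh.symm
    · rw [hinv w, Sym2.eq_swap]

lemma permMatch_isMatching (hg : ∀ v, σ v ≠ v → G.Adj v (σ v)) (hinv : ∀ v, σ (σ v) = v) :
    IsMatching G (permMatch σ) := by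
  constructor
  · intro e he
    rw [Finset.mem_coe, permMatch, Finset.mem_image] at he
    obtain ⟨w, hw, rfl⟩ := he
    rw [Finset.mem_filter] at hw
    exact (G.mem_edgeSet).mpr (hg w hw.2)
  · intro e he f hf hne v ⟨hve, hvf⟩
    rw [(permMatch_edge_form hinv he hve).2, (permMatch_edge_form hinv hf hvf).2] at hne
    exact hne rfl

lemma movedSet_card {σ : Equiv.Perm V} (hinv : ∀ v, σ (σ v) = v) :
    (univ.filter fun v => σ v ≠ v).card = 2 * (permMatch σ).card := by
  have hfib : ∀ e ∈ permMatch σ,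
      ((univ.filter fun v => σ v ≠ v).filter fun w => s(w, σ w) = e).card = 2 := by
    intro e he
    rw [permMatch, Finset.mem_image] at he
    obtain ⟨v, hv, rfl⟩ := he
    rw [Finset.mem_filter] at hv
    have hset : ((univ.filter fun v => σ v ≠ v).filter fun w => s(w, σ w) = s(v, σ v))
        = {v, σ v} := by
      ext w
      simp only [Finset.mem_filter, Finset.mem_univ, true_and, Finset.mem_insert,
        Finset.mem_singleton]
      constructor
      · rintro ⟨hw, heq⟩
        rw [Sym2.eq_iff] at heq
        rcases heq with ⟨rfl, _⟩ | ⟨rfl, _⟩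
        · exact Or.inl rfl
        · exact Or.inr rfl
      · rintro (rfl | rfl)
        · exact ⟨hv.2, rfl⟩
        · refine ⟨?_, ?_⟩
          · rw [hinv]; exact fun hh => hv.2 hh.symm
          · rw [hinv, Sym2.eq_swap]
    rw [hset, Finset.card_insert_of_notMem (by simpa using (Ne.symm hv.2)),
      Finset.card_singleton]
  rw [Finset.card_eq_sum_card_image (fun v => s(v, σ v)) (univ.filter fun v => σ v ≠ v)]
  rw [show ((univ.filter fun v => σ v ≠ v).image fun v => s(v, σ v)) = permMatch σ from rfl]
  rw [Finset.sum_congr rfl hfib, Finset.sum_const, smul_eq_mul, mul_comm]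

lemma matchPerm_permMatch {σ : Equiv.Perm V} (hT : G.IsAcyclic)
    (hg : ∀ v, σ v ≠ v → G.Adj v (σ v)) :
    matchPerm G (permMatch_isMatching hg (good_involutive hT σ hg)) = σ := by
  have hinv := good_involutive hT σ hg
  ext v
  rw [matchPerm_apply]
  by_cases hc : ∃ e, e ∈ permMatch σ ∧ v ∈ e
  · obtain ⟨e, he, hv⟩ := hc
    obtain ⟨hmoved, rfl⟩ := permMatch_edge_form hinv he hv
    have := matchFun_uniq (permMatch_isMatching hg hinv) he hv
    rw [Sym2.eq_iff] at this
    rcases this with ⟨_, h2⟩ | ⟨_, h2⟩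
    · exact h2.symm
    · exact absurd h2 hmoved
  · rw [matchFun_eq_of_not_covered hc]
    by_contra hne
    exact hc ⟨s(v, σ v), Finset.mem_image_of_mem _
      (Finset.mem_filter.mpr ⟨Finset.mem_univ v, fun h => hne h.symm⟩), Sym2.mem_mk_left v _⟩

lemma permMatch_matchPerm {M : Finset (Sym2 V)} (hM : IsMatching G M) :
    permMatch (matchPerm G hM) = M := by
  apply Finset.Subset.antisymm
  · intro e he
    rw [permMatch, Finset.mem_image] at he
    obtain ⟨w, hw, rfl⟩ := he
    rw [Finset.mem_filter, matchPerm_apply] at hw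
    exact matchFun_edge_mem (matchFun_covered hM hw.2)
  · intro e he
    induction e using Sym2.ind with
    | _ x y =>
      have hcov : ∃ e, e ∈ M ∧ x ∈ e := ⟨s(x, y), he, Sym2.mem_mk_left x y⟩
      have huniq := matchFun_uniq hM he (Sym2.mem_mk_left x y)
      rw [permMatch, Finset.mem_image]
      refine ⟨x, ?_, ?_⟩
      · rw [Finset.mem_filter, matchPerm_apply]
        exact ⟨Finset.mem_univ x, matchFun_ne hM hcov⟩
      · rw [matchPerm_apply]; exact huniq.symm

lemma matching_two_card_le {M : Finset (Sym2 V)} (hM : IsMatching G M) :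
    2 * M.card ≤ Fintype.card V := by
  have h1 := movedSet_card (σ := matchPerm G hM) (fun v => matchFun_involutive hM v)
  rw [permMatch_matchPerm hM] at h1
  rw [← h1]
  exact (Finset.card_filter_le _ _).trans (le_of_eq (Finset.card_univ))

/-- The finset of all matchings of `G`. -/
noncomputable def matchings (G : SimpleGraph V) : Finset (Finset (Sym2 V)) :=
  @Finset.filter _ (fun M => IsMatching G M) (Classical.decPred _) univ

lemma mem_matchings {M : Finset (Sym2 V)} : M ∈ matchings G ↔ IsMatching G M := by
  simp only [matchings, Finset.mem_filter, Finset.mem_univ, true_and]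

theorem charpoly_adjMat (hT : G.IsAcyclic) :
    (adjMat G).charpoly =
      ∑ M ∈ matchings G, (-1) ^ M.card * (X : ℝ[X]) ^ (Fintype.card V - 2 * M.card) := by
  classical
  unfold Matrix.charpoly
  rw [Matrix.det_apply]
  rw [← Finset.sum_subset
    (Finset.subset_univ (univ.filter fun σ : Equiv.Perm V => ∀ v, σ v ≠ v → G.Adj v (σ v)))
    (fun σ _ hσ => ?_)]
  swap
  · -- vanishing terms
    rw [Finset.mem_filter, not_and] at hσ
    push_neg at hσ
    obtain ⟨v, hv1, hv2⟩ := hσ (Finset.mem_univ σ)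
    apply smul_eq_zero_of_right
    apply Finset.prod_eq_zero (Finset.mem_univ v)
    rw [Matrix.charmatrix_apply_ne _ _ _ hv1]
    have : adjMat G (σ v) v = 0 := by
      simp only [adjMat]
      rw [SimpleGraph.adjMatrix_apply]
      simp only [ite_eq_right_iff]
      intro hadj
      exact absurd (hadj.symm) hv2
    rw [this, map_zero, neg_zero]
  · -- main bijection
    refine Finset.sum_bij' (fun σ _ => permMatch σ)
      (fun M hM => matchPerm G (mem_matchings.mp hM)) ?_ ?_ ?_ ?_ ?_
    · intro σ hσ
      rw [Finset.mem_filter] at hσ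
      exact mem_matchings.mpr (permMatch_isMatching hσ.2 (good_involutive hT σ hσ.2))
    · intro M hM
      rw [Finset.mem_filter]
      exact ⟨Finset.mem_univ _, matchPerm_good (mem_matchings.mp hM)⟩
    · intro σ hσ
      rw [Finset.mem_filter] at hσ
      -- proof irrelevance: matchPerm depends only on the underlying finset
      have := matchPerm_permMatch hT hσ.2
      convert this using 2
    · intro M hM
      exact permMatch_matchPerm (mem_matchings.mp hM)
    · -- term computation
      intro σ hσ
      rw [Finset.mem_filter] at hσ
      have hg := hσ.2
      have hinv := good_involutive hT σ hg
      have hm := movedSet_card (σ := σ) hinv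
      set m := (permMatch σ).card with hmdef
      have hsign : Equiv.Perm.sign σ = (-1) ^ m := sign_involutive_aux m σ hinv hm
      have hprod : ∏ i, Matrix.charmatrix (adjMat G) (σ i) i
          = (X : ℝ[X]) ^ (Fintype.card V - 2 * m) := by
        rw [← Finset.prod_filter_mul_prod_filter_not univ (fun v => σ v ≠ v)]
        have hentry1 : ∀ i ∈ univ.filter (fun v => σ v ≠ v),
            Matrix.charmatrix (adjMat G) (σ i) i = -1 := by
          intro i hi
          rw [Finset.mem_filter] at hi
          rw [Matrix.charmatrix_apply_ne _ _ _ hi.2]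
          have : adjMat G (σ i) i = 1 := by
            simp only [adjMat]
            rw [SimpleGraph.adjMatrix_apply, if_pos ((hg i hi.2).symm)]
          rw [this, map_one]
        have hentry2 : ∀ i ∈ univ.filter (fun v => ¬ σ v ≠ v),
            Matrix.charmatrix (adjMat G) (σ i) i = (X : ℝ[X]) := by
          intro i hi
          rw [Finset.mem_filter] at hi
          have hfix : σ i = i := by
            by_contra hc; exact hi.2 hc
          rw [hfix, Matrix.charmatrix_apply_eq]
          have : adjMat G i i = 0 := by
            simp [adjMat]
          rw [this, map_zero, sub_zero]
        have h1 : ∏ i ∈ univ.filter (fun v => σ v ≠ v),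
            Matrix.charmatrix (adjMat G) (σ i) i = 1 := by
          rw [Finset.prod_congr rfl hentry1, Finset.prod_const, hm, pow_mul]
          norm_num
        have h2 : ∏ i ∈ univ.filter (fun v => ¬ σ v ≠ v),
            Matrix.charmatrix (adjMat G) (σ i) i = (X : ℝ[X]) ^ (Fintype.card V - 2 * m) := by
          rw [Finset.prod_congr rfl hentry2, Finset.prod_const]
          congr 1
          have := Finset.card_filter_add_card_filter_not
            (s := (univ : Finset V)) (p := fun v => σ v ≠ v)
          rw [Finset.card_univ] at this
          omega
        rw [h1, h2, one_mul]
      rw [hprod, hsign]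
      rw [Units.smul_def]
      have hcast : (((-1 : ℤˣ) ^ m : ℤˣ) : ℤ) = (-1) ^ m := by push_cast; ring
      rw [hcast, zsmul_eq_mul]
      push_cast
      ring


lemma charpoly_conj {n : Type*} [Fintype n] [DecidableEq n] (U D : Matrix n n ℝ)
    (hUV : U * star U = 1) (hVU : star U * U = 1) :
    (U * D * star U).charpoly = D.charpoly := by
  let C' : Matrix n n ℝ →+* Matrix n n (Polynomial ℝ) :=
    RingHom.mapMatrix (Polynomial.C : ℝ →+* Polynomial ℝ)
  have key : Matrix.charmatrix (U * D * star U) = C' U * Matrix.charmatrix D * C' (star U) := by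
    rw [Matrix.charmatrix, Matrix.charmatrix, mul_sub, sub_mul]
    congr 1
    · -- scalar part
      rw [← Matrix.scalar_commute (X : Polynomial ℝ) (fun r' => (Commute.all _ _)) (C' U)]
      rw [mul_assoc, ← map_mul, hUV, map_one, mul_one]
    · rw [← map_mul, ← map_mul]
  unfold Matrix.charpoly
  rw [key, Matrix.det_mul, Matrix.det_mul]
  have hdet : (C' U).det * (C' (star U)).det = 1 := by
    rw [← Matrix.det_mul, ← map_mul, hUV, map_one, Matrix.det_one]
  calc (C' U).det * (Matrix.charmatrix D).det * (C' (star U)).det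
      = ((C' U).det * (C' (star U)).det) * (Matrix.charmatrix D).det := by ring
    _ = (Matrix.charmatrix D).det := by rw [hdet, one_mul]

lemma charpoly_diagonal {n : Type*} [Fintype n] [DecidableEq n] (d : n → ℝ) :
    (Matrix.diagonal d).charpoly = ∏ i, (X - Polynomial.C (d i)) := by
  have h : Matrix.charmatrix (Matrix.diagonal d) =
      Matrix.diagonal (fun i => (X : Polynomial ℝ) - Polynomial.C (d i)) := by
    apply Matrix.ext; intro i j
    by_cases hij : i = j
    · subst hij
      rw [Matrix.charmatrix_apply_eq, Matrix.diagonal_apply_eq, Matrix.diagonal_apply_eq]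
    · rw [Matrix.charmatrix_apply_ne _ _ _ hij, Matrix.diagonal_apply_ne _ hij,
        Matrix.diagonal_apply_ne _ hij, map_zero, neg_zero]
  unfold Matrix.charpoly
  rw [h, Matrix.det_diagonal]

theorem charpoly_eq_prod (G : SimpleGraph V) :
    (adjMat G).charpoly = ∏ i, (X - Polynomial.C (eig G i)) := by
  have hA := adjMat_isHermitian G
  have hspec := hA.spectral_theorem
  set U : Matrix V V ℝ := (Matrix.IsHermitian.eigenvectorUnitary hA : Matrix V V ℝ) with hU
  have hUV : U * star U = 1 :=
    Matrix.mem_unitaryGroup_iff.mp (Matrix.IsHermitian.eigenvectorUnitary hA).2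
  have hVU : star U * U = 1 :=
    Matrix.mem_unitaryGroup_iff'.mp (Matrix.IsHermitian.eigenvectorUnitary hA).2
  have hdiag : Matrix.diagonal (RCLike.ofReal ∘ hA.eigenvalues) = Matrix.diagonal (eig G) := by
    congr 1
  calc (adjMat G).charpoly
      = (U * Matrix.diagonal (eig G) * star U).charpoly := by
        rw [← hdiag]; exact congrArg _ hspec
    _ = (Matrix.diagonal (eig G)).charpoly := charpoly_conj U _ hUV hVU
    _ = ∏ i, (X - Polynomial.C (eig G i)) := charpoly_diagonal _

-- chunk 5 : combinatorics
lemma empty_matching : IsMatching G (∅ : Finset (Sym2 V)) := by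
  constructor
  · simp
  · intro e he; simp at he

lemma exists_two_max (hT : G.IsTree) (hcard : 2 ≤ Fintype.card V)
    (hpm : ¬ ∃ M : Finset (Sym2 V), IsPerfectMatching G M) :
    2 ≤ ((matchings G).filter fun M => M.card = (matchings G).sup Finset.card).card := by
  classical
  set ν := (matchings G).sup Finset.card with hν
  have hne : (matchings G).Nonempty := ⟨∅, mem_matchings.mpr empty_matching⟩
  obtain ⟨M, hMmem, hMcard⟩ := Finset.exists_mem_eq_sup (matchings G) hne Finset.card
  have hM : IsMatching G M := mem_matchings.mp hMmem
  have hmax : ∀ N : Finset (Sym2 V), IsMatching G N → N.card ≤ M.card := by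
    intro N hN
    rw [← hMcard]
    exact Finset.le_sup (mem_matchings.mpr hN)
  -- an uncovered vertex
  have hvex : ∃ v : V, ∀ e ∈ M, v ∉ e := by
    by_contra hc
    push_neg at hc
    exact hpm ⟨M, hM, fun v => by obtain ⟨e, he, hv⟩ := hc v; exact ⟨e, he, hv⟩⟩
  obtain ⟨v, hv⟩ := hvex
  -- a neighbour of v
  have hadj : ∃ u : V, G.Adj v u := by
    obtain ⟨w, hw⟩ := Fintype.exists_ne_of_one_lt_card (by omega) v
    obtain ⟨p⟩ := (hT.isConnected.preconnected v w)
    cases p with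
    | nil => exact absurd rfl (Ne.symm hw)
    | cons h q => exact ⟨_, h⟩
  obtain ⟨u, hu⟩ := hadj
  have huv : u ≠ v := fun h => (G.loopless.irrefl v (h ▸ hu)).elim
  -- u must be covered, else M ∪ {s(v,u)} is a bigger matching
  have hucov : ∃ e ∈ M, u ∈ e := by
    by_contra hc
    push_neg at hc
    have hnotmem : s(v, u) ∉ M := fun h => hv _ h (Sym2.mem_mk_left v u)
    have hN : IsMatching G (insert s(v, u) M) := by
      constructor
      · intro e he
        rw [Finset.mem_coe, Finset.mem_insert] at he
        rcases he with rfl | he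
        · exact G.mem_edgeSet.mpr hu
        · exact hM.1 he
      · intro e he f hf hne w ⟨hwe, hwf⟩
        rw [Finset.mem_insert] at he hf
        rcases he with rfl | he <;> rcases hf with rfl | hf
        · exact hne rfl
        · rw [Sym2.mem_iff] at hwe
          rcases hwe with rfl | rfl
          · exact hv f hf hwf
          · exact hc f hf hwf
        · rw [Sym2.mem_iff] at hwf
          rcases hwf with rfl | rfl
          · exact hv e he hwe
          · exact hc e he hwe
        · exact hM.2 e he f hf hne w ⟨hwe, hwf⟩
    have := hmax _ hN
    rw [Finset.card_insert_of_notMem hnotmem] at this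
    omega
  obtain ⟨e₀, he₀, hue₀⟩ := hucov
  -- the swapped matching
  set M' := insert s(v, u) (M.erase e₀) with hM'
  have hnotmem' : s(v, u) ∉ M.erase e₀ := fun h =>
    hv _ (Finset.mem_of_mem_erase h) (Sym2.mem_mk_left v u)
  have hM'm : IsMatching G M' := by
    constructor
    · intro e he
      rw [hM', Finset.mem_coe, Finset.mem_insert] at he
      rcases he with rfl | he
      · exact G.mem_edgeSet.mpr hu
      · exact hM.1 (Finset.mem_of_mem_erase he)
    · intro e he f hf hne w ⟨hwe, hwf⟩
      rw [hM', Finset.mem_insert] at he hf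
      rcases he with rfl | he <;> rcases hf with rfl | hf
      · exact hne rfl
      · rw [Sym2.mem_iff] at hwe
        rcases hwe with rfl | rfl
        · exact hv f (Finset.mem_of_mem_erase hf) hwf
        · -- w = u ∈ f and u ∈ e₀, f ≠ e₀
          exact hM.2 e₀ he₀ f (Finset.mem_of_mem_erase hf)
            (Ne.symm (Finset.ne_of_mem_erase hf)) w ⟨hue₀, hwf⟩
      · rw [Sym2.mem_iff] at hwf
        rcases hwf with rfl | rfl
        · exact hv e (Finset.mem_of_mem_erase he) hwe
        · exact hM.2 e₀ he₀ e (Finset.mem_of_mem_erase he)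
            (Ne.symm (Finset.ne_of_mem_erase he)) w ⟨hue₀, hwe⟩
      · exact hM.2 e (Finset.mem_of_mem_erase he) f (Finset.mem_of_mem_erase hf) hne w ⟨hwe, hwf⟩
  have hMpos : 1 ≤ M.card := Finset.card_pos.mpr ⟨e₀, he₀⟩
  have hM'card : M'.card = M.card := by
    rw [hM', Finset.card_insert_of_notMem hnotmem', Finset.card_erase_of_mem he₀]
    omega
  have hMne : M' ≠ M := by
    intro h
    have : s(v, u) ∈ M := h ▸ Finset.mem_insert_self _ _
    exact hv _ this (Sym2.mem_mk_left v u)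
  have h1 : M ∈ (matchings G).filter (fun N => N.card = ν) :=
    Finset.mem_filter.mpr ⟨hMmem, by rw [hν, hMcard]⟩
  have h2 : M' ∈ (matchings G).filter (fun N => N.card = ν) :=
    Finset.mem_filter.mpr ⟨mem_matchings.mpr hM'm, by rw [hM'card, hν, hMcard]⟩
  exact Finset.one_lt_card.mpr ⟨M', h2, M, h1, hMne⟩


/-- For a tree with at least two vertices and no perfect matching, the absolute value of the
product of its nonzero adjacency eigenvalues is at least `2`. -/
theorem prod_nonzero_eigenvalues_ge_two (G : SimpleGraph V) (hT : G.IsTree)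
    (hcard : 2 ≤ Fintype.card V)
    (hpm : ¬ ∃ M : Finset (Sym2 V), IsPerfectMatching G M) :
    2 ≤ |∏ i ∈ Finset.univ.filter (fun i : V => eig G i ≠ 0), eig G i| := by

  have hAcyc : G.IsAcyclic := hT.IsAcyclic
  set n := Fintype.card V with hn
  set p := (adjMat G).charpoly with hp
  set S := Finset.univ.filter (fun i : V => eig G i ≠ 0) with hS
  set T := Finset.univ.filter (fun i : V => ¬ eig G i ≠ 0) with hTs
  set z := T.card with hz
  set q := ∏ i ∈ S, ((X : ℝ[X]) - Polynomial.C (eig G i)) with hq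
  have hfac : p = q * (X : ℝ[X]) ^ z := by
    have hTX : ∀ i ∈ T, (X : ℝ[X]) - Polynomial.C (eig G i) = X := by
      intro i hi
      rw [hTs, Finset.mem_filter] at hi
      rw [not_not.mp hi.2, map_zero, sub_zero]
    calc p = ∏ i, ((X : ℝ[X]) - Polynomial.C (eig G i)) := charpoly_eq_prod G
      _ = (∏ i ∈ S, ((X : ℝ[X]) - Polynomial.C (eig G i)))
          * ∏ i ∈ T, ((X : ℝ[X]) - Polynomial.C (eig G i)) :=
        (Finset.prod_filter_mul_prod_filter_not univ _ _).symm
      _ = q * (X : ℝ[X]) ^ z := by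
        rw [Finset.prod_congr rfl hTX, Finset.prod_const, hq, hz]
  have hqeval : q.coeff 0 = ∏ i ∈ S, (- eig G i) := by
    rw [Polynomial.coeff_zero_eq_eval_zero, hq, Polynomial.eval_prod]
    exact Finset.prod_congr rfl (fun i _ => by simp)
  have hq0 : q.coeff 0 ≠ 0 := by
    rw [hqeval]
    rw [Finset.prod_ne_zero_iff]
    intro i hi
    rw [hS, Finset.mem_filter] at hi
    simpa using hi.2
  have habs : |q.coeff 0| = |∏ i ∈ S, eig G i| := by
    rw [hqeval, Finset.abs_prod, Finset.abs_prod]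
    exact Finset.prod_congr rfl (fun i _ => abs_neg _)
  have hcoeffz : p.coeff z = q.coeff 0 := by
    rw [hfac, Polynomial.coeff_mul_X_pow']
    simp
  have hlow : ∀ d, d < z → p.coeff d = 0 := by
    intro d hd
    rw [hfac, Polynomial.coeff_mul_X_pow', if_neg (by omega)]
  have hsum := charpoly_adjMat (G := G) hAcyc
  have hCpow : ∀ m : ℕ, ((-1 : ℝ[X]) ^ m) = Polynomial.C ((-1 : ℝ) ^ m) := by
    intro m; rw [map_pow, map_neg, map_one]
  have hcoeffd : ∀ k : ℕ, 2 * k ≤ n →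
      p.coeff (n - 2 * k)
        = (-1) ^ k * (((matchings G).filter fun M => M.card = k).card : ℝ) := by
    intro k hk
    rw [hp, hsum, Polynomial.finset_sum_coeff]
    have hterm : ∀ M ∈ matchings G,
        ((-1) ^ M.card * (X : ℝ[X]) ^ (Fintype.card V - 2 * M.card)).coeff (n - 2 * k)
          = if M.card = k then ((-1 : ℝ) ^ k) else 0 := by
      intro M hM
      have h2M := matching_two_card_le (mem_matchings.mp hM)
      rw [hCpow, Polynomial.coeff_C_mul, Polynomial.coeff_X_pow]
      by_cases hMk : M.card = k
      · rw [hMk, ← hn, if_pos rfl, mul_one, if_pos rfl]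
      · rw [if_neg (by rw [← hn]; omega), mul_zero, if_neg hMk]
    rw [Finset.sum_congr rfl hterm, ← Finset.sum_filter, Finset.sum_const, nsmul_eq_mul, mul_comm]
  have hz_ne : p.coeff z ≠ 0 := by rw [hcoeffz]; exact hq0
  have hzform : ∃ M ∈ matchings G, z = n - 2 * M.card := by
    by_contra hc
    push_neg at hc
    apply hz_ne
    rw [hp, hsum, Polynomial.finset_sum_coeff]
    apply Finset.sum_eq_zero
    intro M hM
    rw [hCpow, Polynomial.coeff_C_mul, Polynomial.coeff_X_pow,
      if_neg (fun h => hc M hM (by rw [← hn] at h; exact h)), mul_zero]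
  obtain ⟨M0, hM0, hzeq⟩ := hzform
  have hk0n : 2 * M0.card ≤ n := matching_two_card_le (mem_matchings.mp hM0)
  have hνn : 2 * (matchings G).sup Finset.card ≤ n := by
    obtain ⟨Mx, hMx, hMxcard⟩ := Finset.exists_mem_eq_sup (matchings G)
      ⟨∅, mem_matchings.mpr empty_matching⟩ Finset.card
    rw [hMxcard]
    exact matching_two_card_le (mem_matchings.mp hMx)
  have hk0ν : M0.card ≤ (matchings G).sup Finset.card := Finset.le_sup hM0
  have hm2 : 2 ≤ (((matchings G).filter
      fun M => M.card = (matchings G).sup Finset.card).card) := exists_two_max hT hcard hpm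
  have hcν : p.coeff (n - 2 * (matchings G).sup Finset.card) ≠ 0 := by
    rw [hcoeffd _ hνn]
    apply mul_ne_zero (pow_ne_zero _ (by norm_num))
    exact_mod_cast (by omega : (((matchings G).filter
      fun M => M.card = (matchings G).sup Finset.card).card) ≠ 0)
  have hge : z ≤ n - 2 * (matchings G).sup Finset.card := le_of_not_gt (fun hlt => hcν (hlow _ hlt))
  have hkeq : M0.card = (matchings G).sup Finset.card := by omega
  have hfin : |p.coeff z| = (((matchings G).filter
      fun M => M.card = (matchings G).sup Finset.card).card : ℝ) := by
    rw [hzeq, hkeq, hcoeffd _ hνn, abs_mul, abs_pow, abs_neg, abs_one, one_pow, one_mul,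
      Nat.abs_cast]
  calc (2 : ℝ) ≤ (((matchings G).filter
      fun M => M.card = (matchings G).sup Finset.card).card : ℝ) := by exact_mod_cast hm2
    _ = |p.coeff z| := hfin.symm
    _ = |q.coeff 0| := by rw [hcoeffz]
    _ = |∏ i ∈ S, eig G i| := habs
end GraphEnergy
end

section
/- For every finite simple graph G of order n with adjacency eigenvalues λ₁ ≥ λ₂ ≥ ⋯ ≥ λₙ, one has n − χ(Ḡ) ≤ λ₁ + λ₂ + ⋯ + λ_{χ(Ḡ)}, where χ(Ḡ) is the chromatic number of the complement of G. -/
set_option linter.unusedSectionVars false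

open Finset SimpleGraph

namespace GraphEnergy

variable {V : Type*} [Fintype V] [DecidableEq V]

set_option maxHeartbeats 1000000

-- A u v = ∑ w, U u w * eig G w * U v w
lemma adjMat_entry (G : SimpleGraph V) (u v : V) :
    adjMat G u v = ∑ w, ((adjMat_isHermitian G).eigenvectorUnitary : Matrix V V ℝ) u w *
      eig G w * ((adjMat_isHermitian G).eigenvectorUnitary : Matrix V V ℝ) v w := by
  set hA := adjMat_isHermitian G
  have hspec := hA.spectral_theorem
  rw [Unitary.conjStarAlgAut_apply] at hspec
  have h := congrFun (congrFun hspec u) v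
  rw [h, Matrix.mul_apply]
  refine Finset.sum_congr rfl fun w _ => ?_
  rw [Matrix.mul_apply, Finset.sum_mul]
  rw [Finset.sum_eq_single w]
  · simp [Matrix.star_apply, eig, mul_assoc]
  · intro b _ hb
    simp [Matrix.diagonal_apply_ne _ hb]
  · simp

lemma unitary_rows_orthonormal (G : SimpleGraph V) (u v : V) :
    ∑ w, ((adjMat_isHermitian G).eigenvectorUnitary : Matrix V V ℝ) u w *
      ((adjMat_isHermitian G).eigenvectorUnitary : Matrix V V ℝ) v w
      = if u = v then 1 else 0 := by
  set hA := adjMat_isHermitian G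
  have h1 : ((hA.eigenvectorUnitary : Matrix V V ℝ) * star (hA.eigenvectorUnitary : Matrix V V ℝ)) = 1 :=
    Unitary.mul_star_self_of_mem hA.eigenvectorUnitary.prop
  have h := congrFun (congrFun h1 u) v
  rw [Matrix.mul_apply] at h
  simp only [Matrix.star_apply, star_trivial] at h
  rw [h, Matrix.one_apply]

lemma card_filter_lt (n k : ℕ) (hk : k ≤ n) :
    (Finset.univ.filter (fun j : Fin n => (j : ℕ) < k)).card = k := by
  have : (Finset.univ.filter (fun j : Fin n => (j : ℕ) < k)) =
      Finset.map (Fin.castLEEmb hk) Finset.univ := by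
    ext j
    simp only [mem_filter, mem_univ, true_and, mem_map, Fin.castLEEmb_apply]
    constructor
    · intro h; exact ⟨⟨(j : ℕ), h⟩, by ext; simp⟩
    · rintro ⟨i, rfl⟩; simpa using i.2
  rw [this]; simp

lemma sum_invariant (μ : Fin (Fintype.card V) → ℝ) (e : V → ℝ)
    (hlist : Multiset.map μ Finset.univ.val = Multiset.map e Finset.univ.val)
    (f : ℝ → ℝ) : ∑ j, f (μ j) = ∑ v, f (e v) := by
  have h := congrArg (fun m => (Multiset.map f m).sum) hlist
  simp only [Multiset.map_map, Function.comp] at h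
  rw [Finset.sum, Finset.sum]
  exact h

lemma key_lemma (μ : Fin (Fintype.card V) → ℝ) (hmono : Antitone μ) (e : V → ℝ)
    (hlist : Multiset.map μ Finset.univ.val = Multiset.map e Finset.univ.val)
    (k : ℕ) (hk : k ≤ Fintype.card V) (c : V → ℝ)
    (h0 : ∀ v, 0 ≤ c v) (h1 : ∀ v, c v ≤ 1) (hsum : ∑ v, c v = k) :
    ∑ v, e v * c v ≤ ∑ j ∈ Finset.univ.filter (fun j : Fin (Fintype.card V) => (j : ℕ) < k), μ j := by
  rcases eq_or_lt_of_le hk with heq | hlt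
  · have hone : ∀ v, c v = 1 := by
      intro v
      refine le_antisymm (h1 v) ?_
      have h2 : ∑ u ∈ Finset.univ.erase v, c u ≤ (Fintype.card V - 1 : ℕ) := by
        have h' := Finset.sum_le_card_nsmul (Finset.univ.erase v) c 1 (fun u _ => h1 u)
        rw [Finset.card_erase_of_mem (Finset.mem_univ v), Finset.card_univ] at h'
        simpa using h'
      have h3 : c v + ∑ u ∈ Finset.univ.erase v, c u = (k : ℝ) := by
        rw [← hsum]; exact Finset.add_sum_erase Finset.univ c (Finset.mem_univ v)
      have hcard : 1 ≤ Fintype.card V := Fintype.card_pos_iff.2 ⟨v⟩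
      have : ((Fintype.card V - 1 : ℕ) : ℝ) = (Fintype.card V : ℝ) - 1 := by
        push_cast [hcard]; ring
      rw [this] at h2
      have : (k : ℝ) = Fintype.card V := by rw [heq]
      linarith
    have hfilter : (Finset.univ.filter (fun j : Fin (Fintype.card V) => (j : ℕ) < k)) = Finset.univ := by
      ext j; simp only [mem_filter, mem_univ, true_and, iff_true]
      rw [heq]; exact j.2
    rw [hfilter]
    refine le_of_eq ?_
    calc ∑ v, e v * c v = ∑ v, e v := by simp [hone]
      _ = ∑ j, μ j := by
          have := sum_invariant μ e hlist id
          simpa using this.symm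
  · set t := μ ⟨k, hlt⟩ with ht
    have step1 : ∑ v, e v * c v = ∑ v, (e v - t) * c v + t * k := by
      rw [← hsum]; rw [Finset.mul_sum, ← Finset.sum_add_distrib]; congr 1; ext v; ring
    have step2 : ∑ v, (e v - t) * c v ≤ ∑ v, max (e v - t) 0 := by
      apply Finset.sum_le_sum
      intro v _
      rcases le_or_gt 0 (e v - t) with h | h
      · calc (e v - t) * c v ≤ (e v - t) * 1 := by nlinarith [h1 v, h0 v]
          _ ≤ max (e v - t) 0 := by simp [le_max_iff]
      · calc (e v - t) * c v ≤ 0 := by nlinarith [h0 v]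
          _ ≤ max (e v - t) 0 := le_max_right _ _
    have step3 : ∑ v, max (e v - t) 0 = ∑ j, max (μ j - t) 0 :=
      (sum_invariant μ e hlist (fun z => max (z - t) 0)).symm
    have step4 : ∑ j, max (μ j - t) 0 =
        ∑ j ∈ Finset.univ.filter (fun j : Fin (Fintype.card V) => (j : ℕ) < k), (μ j - t) := by
      rw [← Finset.sum_filter_add_sum_filter_not Finset.univ
        (fun j : Fin (Fintype.card V) => (j : ℕ) < k) (fun j => max (μ j - t) 0)]
      have e1 : ∀ j ∈ Finset.univ.filter (fun j : Fin (Fintype.card V) => (j : ℕ) < k),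
          max (μ j - t) 0 = μ j - t := by
        intro j hj
        simp only [mem_filter] at hj
        have : t ≤ μ j := hmono (by simpa [Fin.le_def] using hj.2.le)
        simp [max_eq_left, sub_nonneg.2 this]
      have e2 : ∀ j ∈ Finset.univ.filter (fun j : Fin (Fintype.card V) => ¬ (j : ℕ) < k),
          max (μ j - t) 0 = 0 := by
        intro j hj
        simp only [mem_filter] at hj
        have : μ j ≤ t := hmono (by simpa [Fin.le_def] using Nat.le_of_not_lt hj.2)
        simp [max_eq_right, sub_nonpos.2 this]
      rw [Finset.sum_congr rfl e1, Finset.sum_congr rfl e2, Finset.sum_const_zero, add_zero]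
    have hcard := card_filter_lt (Fintype.card V) k hk
    have step5 : ∑ j ∈ Finset.univ.filter (fun j : Fin (Fintype.card V) => (j : ℕ) < k), (μ j - t)
        = (∑ j ∈ Finset.univ.filter (fun j : Fin (Fintype.card V) => (j : ℕ) < k), μ j) - t * k := by
      rw [Finset.sum_sub_distrib, Finset.sum_const, hcard, nsmul_eq_mul]
      ring
    linarith [step2]

lemma quadform_le (G : SimpleGraph V) (μ : Fin (Fintype.card V) → ℝ) (hmono : Antitone μ)
    (hlist : Multiset.map μ Finset.univ.val = Multiset.map (eig G) Finset.univ.val)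
    (k : ℕ) (x : Fin k → V → ℝ)
    (honb : ∀ i j, ∑ v, x i v * x j v = if i = j then 1 else 0) :
    ∑ i, ∑ u, ∑ v, x i u * adjMat G u v * x i v ≤
      ∑ j ∈ Finset.univ.filter (fun j : Fin (Fintype.card V) => (j : ℕ) < k), μ j := by
  set U : Matrix V V ℝ := ((adjMat_isHermitian G).eigenvectorUnitary : Matrix V V ℝ) with hU
  set y : Fin k → V → ℝ := fun i w => ∑ u, U u w * x i u with hy
  have hyy : ∀ i j, ∑ w, y i w * y j w = if i = j then 1 else 0 := by
    intro i j
    calc ∑ w, y i w * y j w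
        = ∑ w, ∑ u, ∑ v, (U u w * x i u) * (U v w * x j v) := by
          refine Finset.sum_congr rfl fun w _ => ?_
          rw [hy]; rw [Finset.sum_mul_sum]
      _ = ∑ u, ∑ v, ∑ w, (U u w * x i u) * (U v w * x j v) := by
          rw [Finset.sum_comm]
          exact Finset.sum_congr rfl fun u _ => Finset.sum_comm
      _ = ∑ u, ∑ v, (x i u * x j v) * ∑ w, U u w * U v w := by
          refine Finset.sum_congr rfl fun u _ => Finset.sum_congr rfl fun v _ => ?_
          rw [Finset.mul_sum]
          exact Finset.sum_congr rfl fun w _ => by ring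
      _ = ∑ u, x i u * x j u := by
          refine Finset.sum_congr rfl fun u _ => ?_
          rw [Finset.sum_eq_single u]
          · rw [unitary_rows_orthonormal]; simp
          · intro v _ hv
            rw [unitary_rows_orthonormal]
            simp [Ne.symm hv]
          · simp
      _ = if i = j then 1 else 0 := honb i j
  have hquad : ∀ i, ∑ u, ∑ v, x i u * adjMat G u v * x i v = ∑ w, eig G w * (y i w) ^ 2 := by
    intro i
    calc ∑ u, ∑ v, x i u * adjMat G u v * x i v
        = ∑ u, ∑ v, ∑ w, (U u w * x i u) * (eig G w) * (U v w * x i v) := by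
          refine Finset.sum_congr rfl fun u _ => Finset.sum_congr rfl fun v _ => ?_
          rw [adjMat_entry, Finset.mul_sum, Finset.sum_mul]
          exact Finset.sum_congr rfl fun w _ => by rw [hU]; ring
      _ = ∑ u, ∑ w, ∑ v, (U u w * x i u) * (eig G w) * (U v w * x i v) :=
          Finset.sum_congr rfl fun u _ => Finset.sum_comm
      _ = ∑ w, ∑ u, ∑ v, (U u w * x i u) * (eig G w) * (U v w * x i v) :=
          Finset.sum_comm
      _ = ∑ w, eig G w * (y i w) ^ 2 := by
          refine Finset.sum_congr rfl fun w _ => ?_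
          rw [sq, hy]
          simp only []
          rw [Finset.sum_mul_sum, Finset.mul_sum]
          refine Finset.sum_congr rfl fun u _ => ?_
          rw [Finset.mul_sum]
          exact Finset.sum_congr rfl fun v _ => by ring
  set c : V → ℝ := fun w => ∑ i, (y i w) ^ 2 with hc
  have h0 : ∀ w, 0 ≤ c w := fun w => Finset.sum_nonneg fun i _ => sq_nonneg _
  have hsum : ∑ w, c w = k := by
    rw [hc]
    rw [Finset.sum_comm]
    have : ∀ i : Fin k, ∑ w, (y i w) ^ 2 = 1 := by
      intro i
      have h := hyy i i
      simp at h
      rw [← h]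
      exact Finset.sum_congr rfl fun w _ => by rw [pow_two]
    rw [Finset.sum_congr rfl fun i _ => this i]
    simp
  have h1 : ∀ w, c w ≤ 1 := by
    intro w0
    set g : V → ℝ := fun u => ∑ i, y i w0 * y i u with hg
    have hg0 : g w0 = c w0 := by
      rw [hg, hc]
      exact Finset.sum_congr rfl fun i _ => by rw [pow_two]
    have hgsum : ∑ u, (g u) ^ 2 = c w0 := by
      calc ∑ u, (g u) ^ 2
          = ∑ u, ∑ i, ∑ j, (y i w0 * y i u) * (y j w0 * y j u) := by
            refine Finset.sum_congr rfl fun u _ => ?_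
            rw [sq, hg]
            simp only []
            rw [Finset.sum_mul_sum]
        _ = ∑ i, ∑ j, ∑ u, (y i w0 * y i u) * (y j w0 * y j u) := by
            rw [Finset.sum_comm]
            exact Finset.sum_congr rfl fun i _ => Finset.sum_comm
        _ = ∑ i, ∑ j, (y i w0 * y j w0) * ∑ u, y i u * y j u := by
            refine Finset.sum_congr rfl fun i _ => Finset.sum_congr rfl fun j _ => ?_
            rw [Finset.mul_sum]
            exact Finset.sum_congr rfl fun u _ => by ring
        _ = c w0 := by
            rw [hc]
            refine Finset.sum_congr rfl fun i _ => ?_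
            rw [Finset.sum_eq_single i]
            · rw [hyy i i]; simp [pow_two]
            · intro j _ hj
              rw [hyy i j]
              simp [Ne.symm hj]
            · simp
    have hle : (g w0) ^ 2 ≤ ∑ u, (g u) ^ 2 :=
      Finset.single_le_sum (fun u _ => sq_nonneg (g u)) (Finset.mem_univ w0)
    rw [hg0, hgsum] at hle
    nlinarith [h0 w0]
  have hk : k ≤ Fintype.card V := by
    have : (k : ℝ) ≤ Fintype.card V := by
      rw [← hsum]
      calc ∑ w, c w ≤ ∑ _w : V, (1 : ℝ) := Finset.sum_le_sum fun w _ => h1 w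
        _ = Fintype.card V := by simp
    exact_mod_cast this
  calc ∑ i, ∑ u, ∑ v, x i u * adjMat G u v * x i v
      = ∑ i, ∑ w, eig G w * (y i w) ^ 2 := Finset.sum_congr rfl fun i _ => hquad i
    _ = ∑ w, eig G w * c w := by
        rw [Finset.sum_comm]
        refine Finset.sum_congr rfl fun w _ => ?_
        rw [hc, Finset.mul_sum]
    _ ≤ _ := key_lemma μ hmono (eig G) hlist k hk c h0 h1 hsum

lemma adjMat_of_adj (G : SimpleGraph V) {u v : V} (h : G.Adj u v) : adjMat G u v = 1 := by
  letI := Classical.decRel G.Adj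
  simp [adjMat, h]

lemma adjMat_of_not_adj (G : SimpleGraph V) {u v : V} (h : ¬ G.Adj u v) : adjMat G u v = 0 := by
  letI := Classical.decRel G.Adj
  simp [adjMat, h]


/-- If `μ` lists the adjacency eigenvalues of `G` in nonincreasing order
`λ₁ ≥ λ₂ ≥ ⋯ ≥ λₙ`, then `n - χ(Ḡ) ≤ λ₁ + ⋯ + λ_{χ(Ḡ)}`. -/
theorem sum_top_eigenvalues_ge (G : SimpleGraph V) (μ : Fin (Fintype.card V) → ℝ)
    (hmono : Antitone μ)
    (hlist : Multiset.map μ Finset.univ.val = Multiset.map (eig G) Finset.univ.val) :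
    (Fintype.card V : ℝ) - (Gᶜ.chromaticNumber.toNat : ℝ) ≤
      ∑ i ∈ Finset.univ.filter
        (fun i : Fin (Fintype.card V) => (i : ℕ) < Gᶜ.chromaticNumber.toNat), μ i := by
  set k := Gᶜ.chromaticNumber.toNat with hkdef
  have hcol : Gᶜ.Colorable k := Gᶜ.colorable_chromaticNumber_of_fintype
  obtain ⟨C⟩ := hcol
  have hne : Gᶜ.chromaticNumber ≠ ⊤ := by
    have := Gᶜ.colorable_of_fintype.chromaticNumber_le
    intro h; rw [h] at this; exact (ENat.coe_lt_top (Fintype.card V)).not_ge this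
  have hsurj : Function.Surjective C :=
    (le_chromaticNumber_iff_forall_surjective.mp (le_of_eq (ENat.coe_toNat hne))) C
  set S : Fin k → Finset V := fun i => Finset.univ.filter (fun v => C v = i) with hS
  have hSi : ∀ i, S i = Finset.univ.filter (fun v => C v = i) := fun i => rfl
  have hSpos : ∀ i, 0 < (S i).card := by
    intro i
    obtain ⟨v, hv⟩ := hsurj i
    exact Finset.card_pos.2 ⟨v, by rw [hSi i]; exact Finset.mem_filter.2 ⟨Finset.mem_univ v, hv⟩⟩
  set r : Fin k → ℝ := fun i => (Real.sqrt ((S i).card : ℝ))⁻¹ with hr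
  have hrr : ∀ i, r i * r i = (((S i).card : ℝ))⁻¹ := by
    intro i
    rw [hr]
    rw [← mul_inv]
    rw [Real.mul_self_sqrt (Nat.cast_nonneg _)]
  set x : Fin k → V → ℝ := fun i v => if C v = i then r i else 0 with hx
  have honb : ∀ i j, ∑ v, x i v * x j v = if i = j then 1 else 0 := by
    intro i j
    by_cases hij : i = j
    · subst hij
      rw [if_pos rfl]
      have h1 : ∑ v, x i v * x i v = ∑ v ∈ S i, r i * r i := by
        rw [hSi i, Finset.sum_filter]
        refine Finset.sum_congr rfl fun v _ => ?_
        by_cases h : C v = i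
        · rw [if_pos h]; simp only [hx]; rw [if_pos h]
        · rw [if_neg h]; simp only [hx]; rw [if_neg h, mul_zero]
      rw [h1, Finset.sum_const, hrr i, nsmul_eq_mul]
      exact mul_inv_cancel₀ (Nat.cast_ne_zero.2 (hSpos i).ne')
    · rw [if_neg hij]
      refine Finset.sum_eq_zero fun v _ => ?_
      simp only [hx]
      by_cases h : C v = i
      · have hcj : C v ≠ j := fun hj => hij (h.symm.trans hj)
        rw [if_neg hcj, mul_zero]
      · rw [if_neg h, zero_mul]
  have hquadval : ∀ i, ∑ u, ∑ v, x i u * adjMat G u v * x i v = ((S i).card : ℝ) - 1 := by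
    intro i
    have step : ∑ u, ∑ v, x i u * adjMat G u v * x i v
        = ∑ u ∈ S i, ∑ v ∈ S i, r i * adjMat G u v * r i := by
      rw [hSi i, Finset.sum_filter]
      refine Finset.sum_congr rfl fun u _ => ?_
      rw [Finset.sum_filter]
      by_cases hu : C u = i
      · rw [if_pos hu]
        refine Finset.sum_congr rfl fun v _ => ?_
        by_cases hv : C v = i
        · rw [if_pos hv]; simp only [hx]; rw [if_pos hu, if_pos hv]
        · rw [if_neg hv]; simp only [hx]; rw [if_neg hv, mul_zero]
      · rw [if_neg hu]
        refine Finset.sum_eq_zero fun v _ => ?_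
        simp only [hx]; rw [if_neg hu]; ring
    rw [step]
    have step2 : ∀ u ∈ S i, ∀ v ∈ S i, r i * adjMat G u v * r i
        = r i * (if u = v then 0 else 1) * r i := by
      intro u hu v hv
      rw [hSi i, Finset.mem_filter] at hu hv
      congr 2
      by_cases huv : u = v
      · subst huv
        rw [if_pos rfl, adjMat_of_not_adj G (G.irrefl)]
      · rw [if_neg huv]
        have hnc : ¬ Gᶜ.Adj u v := fun hadj => C.valid hadj (hu.2.trans hv.2.symm)
        have : G.Adj u v := by
          by_contra hg
          exact hnc ((G.compl_adj u v).2 ⟨huv, hg⟩)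
        exact adjMat_of_adj G this
    rw [Finset.sum_congr rfl fun u hu => Finset.sum_congr rfl fun v hv => step2 u hu v hv]
    have inner : ∀ u ∈ S i, ∑ v ∈ S i, r i * (if u = v then 0 else 1) * r i
        = r i * r i * (((S i).card : ℝ) - 1) := by
      intro u hu
      have h2 : ∀ v, r i * (if u = v then 0 else 1) * r i
          = r i * r i - (if u = v then r i * r i else 0) := by
        intro v; by_cases h : u = v <;> simp [h] <;> ring
      rw [Finset.sum_congr rfl fun v _ => h2 v, Finset.sum_sub_distrib,
        Finset.sum_const, Finset.sum_ite_eq (S i) u (fun _ => r i * r i), if_pos hu,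
        nsmul_eq_mul]
      ring
    rw [Finset.sum_congr rfl inner, Finset.sum_const, nsmul_eq_mul, hrr i]
    have hcard : ((S i).card : ℝ) ≠ 0 := Nat.cast_ne_zero.2 (hSpos i).ne'
    field_simp
  have hpart : ∑ i, ((S i).card : ℝ) = (Fintype.card V : ℝ) := by
    have h := Finset.card_eq_sum_card_fiberwise
      (fun v (_ : v ∈ Finset.univ) => Finset.mem_univ (C v))
    rw [Finset.card_univ] at h
    have h' : (Fintype.card V : ℕ) = ∑ b : Fin k, (S b).card := h
    rw [h']
    push_cast
    rfl
  have main := quadform_le G μ hmono hlist k x honb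
  calc (Fintype.card V : ℝ) - (k : ℝ)
      = ∑ i, (((S i).card : ℝ) - 1) := by
        rw [Finset.sum_sub_distrib, hpart, Finset.sum_const, Finset.card_univ, Fintype.card_fin,
          nsmul_eq_mul, mul_one]
    _ = ∑ i, ∑ u, ∑ v, x i u * adjMat G u v * x i v :=
        (Finset.sum_congr rfl fun i _ => (hquadval i).symm)
    _ ≤ _ := main

end GraphEnergy
end
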